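/- arXiv:1206.3026 — 2 statements merged into one kernel-verified Lean document; each statement's English description precedes it below -/
import Mathlib

section
/- The composition T = P ∥ Q of two composable transition systems satisfies constraint 1: for each state (s_P,s_Q) of T and each set A of input events of T, there is exactly one transition from (s_P,s_Q) whose label matches A. -/
open Classical

noncomputable section

abbrev BExpr (E : Type) := (E → Bool) → Bool

def DependsOn' {E : Type} (l : BExpr E) (V : Set E) : Prop :=
  ∀ σ τ : E → Bool, (∀ a ∈ V, σ a = τ a) → l σ = l τ

def IsFullConj {E : Type} (l : BExpr E) (V : Set E) : Prop :=
  ∃ p : E → Bool, ∀ σ : E → Bool, (l σ = true ↔ ∀ a ∈ V, σ a = p a)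

def Matches' {E : Type} (I : Set E) (l : BExpr E) (A : Set E) : Prop :=
  ∃ σ : E → Bool, (∀ a ∈ I, (σ a = true ↔ a ∈ A)) ∧ l σ = true

def Sat {E : Type} (l : BExpr E) : Prop := ∃ σ, l σ = true

structure TS (E : Type) where
  S : Type
  i : S
  Ev : Set E
  I : Set E
  Tran : Set (S × BExpr E × S)

namespace TS

variable {E : Type}

/-- Constraint 1: determinism/totality of matching. -/
def C1 (T : TS E) : Prop :=
  ∀ s : T.S, ∀ A : Set E, A ⊆ T.I →
    ∃! t : BExpr E × T.S, ((s, t.1, t.2) ∈ T.Tran ∧ Matches' T.I t.1 A)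

/-- Constraint 2: every label has the form x·y, x ∈ Bool(I), y ∈ Conj(E∖I). -/
def C2 (T : TS E) : Prop :=
  ∀ ⦃s : T.S⦄ ⦃l : BExpr E⦄ ⦃s' : T.S⦄, (s, l, s') ∈ T.Tran →
    ∃ x y : BExpr E, DependsOn' x T.I ∧ IsFullConj y (T.Ev \ T.I) ∧
      ∀ σ, l σ = (x σ && y σ)

inductive Reach (T : TS E) : T.S → Prop
  | init : Reach T T.i
  | step {s : T.S} {l : BExpr E} {s' : T.S} :
      Reach T s → (s, l, s') ∈ T.Tran → Sat l → Reach T s'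

/-- Constraint 3: all states reachable. -/
def C3 (T : TS E) : Prop := ∀ s : T.S, Reach T s

/-- Constraint 4: a single output subexpression per state. -/
def C4 (T : TS E) : Prop :=
  ∀ s : T.S, ∃ y : BExpr E, IsFullConj y (T.Ev \ T.I) ∧
    ∀ ⦃l : BExpr E⦄ ⦃s' : T.S⦄, (s, l, s') ∈ T.Tran →
      ∃ x : BExpr E, DependsOn' x T.I ∧ ∀ σ, l σ = (x σ && y σ)

def WF (T : TS E) : Prop := T.I ⊆ T.Ev

/-- θ / hiding of shared variables: existentially quantify them away. -/
def hide (H : Set E) (l : BExpr E) : BExpr E :=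
  fun σ => decide (∃ τ : E → Bool, (∀ a ∉ H, τ a = σ a) ∧ l τ = true)

/-- Product T' = P × Q. -/
def prod (P Q : TS E) : TS E where
  S := P.S × Q.S
  i := (P.i, Q.i)
  Ev := P.Ev ∪ Q.Ev
  I := P.I ∪ Q.I
  Tran := { t | ∃ lP lQ : BExpr E,
      (t.1.1, lP, t.2.2.1) ∈ P.Tran ∧ (t.1.2, lQ, t.2.2.2) ∈ Q.Tran ∧
      t.2.1 = fun σ => lP σ && lQ σ }

/-- Composition T = P ∥ Q: satisfiable product transitions with shared events hidden. -/
def comp (P Q : TS E) : TS E where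
  S := P.S × Q.S
  i := (P.i, Q.i)
  Ev := (P.Ev ∪ Q.Ev) \ (P.Ev ∩ Q.Ev)
  I := (P.I ∪ Q.I) \ (P.Ev ∩ Q.Ev)
  Tran := { t | ∃ lP lQ : BExpr E,
      (t.1.1, lP, t.2.2.1) ∈ P.Tran ∧ (t.1.2, lQ, t.2.2.2) ∈ Q.Tran ∧
      Sat (fun σ => lP σ && lQ σ) ∧
      t.2.1 = hide (P.Ev ∩ Q.Ev) (fun σ => lP σ && lQ σ) }

/-- Condition D: every shared event is an input of exactly one of the systems. -/
def SharedOK (P Q : TS E) : Prop :=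
  ∀ a ∈ P.Ev ∩ Q.Ev, (a ∈ P.I ∧ a ∉ Q.I) ∨ (a ∈ Q.I ∧ a ∉ P.I)

def Composable (P Q : TS E) : Prop :=
  P.WF ∧ Q.WF ∧ P.C1 ∧ P.C2 ∧ P.C3 ∧ Q.C1 ∧ Q.C2 ∧ Q.C3 ∧ SharedOK P Q ∧
  (P.C4 ∨ Q.C4) ∧
  (¬ P.C4 → P.Ev ∩ Q.Ev = P.Ev \ P.I) ∧
  (¬ Q.C4 → P.Ev ∩ Q.Ev = Q.Ev \ Q.I)

/-- A run of the system under input sequence A. -/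
def Run (T : TS E) (A : ℕ → Set E) (r : ℕ → T.S) : Prop :=
  r 0 = T.i ∧ ∀ n : ℕ, ∃ l : BExpr E,
    (r n, l, r (n + 1)) ∈ T.Tran ∧ Matches' T.I l (A n)

/-- Output event e occurs at time t of the run. -/
def EmitsAt (T : TS E) (A : ℕ → Set E) (r : ℕ → T.S) (e : E) (t : ℕ) : Prop :=
  ∃ l : BExpr E, (r t, l, r (t + 1)) ∈ T.Tran ∧ Matches' T.I l (A t) ∧
    ∀ σ : E → Bool, l σ = true → σ e = true

end TS

/-!
At a state `(sP, sQ)` the two components can be resolved one after the other. If `Q` satisfies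
constraint 4, its outputs at `sQ` do not depend on the transition taken, so the input set `A`
determines all inputs of `P`; constraint 1 for `P` selects `P`'s transition, whose output
conjunction then fixes the inputs `Q` receives from `P`, and constraint 1 for `Q` selects `Q`'s
transition. If `Q` violates constraint 4, it receives nothing from `P`, and the same argument
runs with the roles of `P` and `Q` exchanged. Hiding the shared events does not affect matching,
because the inputs of the composition are disjoint from them.
-/

open Set

namespace TS

variable {E : Type}

def C1At (T : TS E) (s : T.S) : Prop :=
  ∀ A : Set E, A ⊆ T.I →
    ∃! t : BExpr E × T.S, ((s, t.1, t.2) ∈ T.Tran ∧ Matches' T.I t.1 A)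

def FixesOn (T : TS E) (s : T.S) (V : Set E) (p : E → Bool) : Prop :=
  ∀ ⦃l : BExpr E⦄ ⦃s' : T.S⦄, (s, l, s') ∈ T.Tran → ∀ σ, l σ = true → ∀ a ∈ V, σ a = p a

theorem FixesOn.mono {T : TS E} {s : T.S} {V W : Set E} {p : E → Bool}
    (h : T.FixesOn s W p) (hVW : V ⊆ W) : T.FixesOn s V p :=
  fun _ _ ht σ hσ a ha => h ht σ hσ a (hVW ha)

theorem matches'_iff {I A : Set E} {l : BExpr E} :
    Matches' I l A ↔ ∃ σ : E → Bool, (∀ a ∈ I, σ a = decide (a ∈ A)) ∧ l σ = true :=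
  exists_congr fun σ => and_congr_left' <| forall₂_congr fun a _ => by cases σ a <;> simp

theorem matches'_hide_iff {I H A : Set E} {l : BExpr E} (hIH : Disjoint I H) :
    Matches' I (hide H l) A ↔ Matches' I l A := by
  constructor
  · rintro ⟨σ, hσA, hσ⟩
    obtain ⟨τ, hτσ, hτ⟩ := of_decide_eq_true hσ
    exact ⟨τ, fun a ha => hτσ a (hIH.notMem_of_mem_left ha) ▸ hσA a ha, hτ⟩
  · rintro ⟨σ, hσA, hσ⟩
    exact ⟨σ, hσA, decide_eq_true ⟨σ, fun _ _ => rfl, hσ⟩⟩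

section Constraints

variable {T : TS E} {s s' s'' : T.S} {l l' : BExpr E} {σ τ : E → Bool}

theorem C1.exists_tran (hT : T.C1) (s : T.S) (ρ : E → Bool) :
    ∃ l s' σ, (s, l, s') ∈ T.Tran ∧ (∀ a ∈ T.I, σ a = ρ a) ∧ l σ = true := by
  obtain ⟨⟨l, s'⟩, ⟨ht, σ, hσρ, hσ⟩, -⟩ := hT s {a | a ∈ T.I ∧ ρ a = true} fun _ ha => ha.1
  exact ⟨l, s', σ, ht, fun a ha => Bool.eq_iff_iff.mpr ((hσρ a ha).trans (and_iff_right ha)), hσ⟩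

theorem C1.eq_of_eqOn_inputs (hT : T.C1) (ht : (s, l, s') ∈ T.Tran) (ht' : (s, l', s'') ∈ T.Tran)
    (hσ : l σ = true) (hτ : l' τ = true) (hστ : ∀ a ∈ T.I, σ a = τ a) : (l, s') = (l', s'') := by
  obtain ⟨_, -, huniq⟩ := hT s {a | a ∈ T.I ∧ σ a = true} fun _ ha => ha.1
  have hl := huniq (l, s') ⟨ht, σ, fun a ha => by simp [ha], hσ⟩
  have hl' := huniq (l', s'') ⟨ht', τ, fun a ha => by simp [ha, hστ a ha], hτ⟩
  exact hl.trans hl'.symm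

theorem C2.dependsOn (hT : T.C2) (hw : T.WF) (ht : (s, l, s') ∈ T.Tran) : DependsOn' l T.Ev := by
  obtain ⟨x, y, hx, ⟨p, hy⟩, hl⟩ := hT ht
  intro σ τ hστ
  have hy' : y σ = y τ := Bool.eq_iff_iff.mpr <| by
    rw [hy, hy]
    exact forall₂_congr fun a ha => by rw [hστ a ha.1]
  rw [hl, hl, hx σ τ fun a ha => hστ a (hw ha), hy']

theorem C2.eqOn_outputs (hT : T.C2) (ht : (s, l, s') ∈ T.Tran) (hσ : l σ = true)
    (hτ : l τ = true) : ∀ a ∈ T.Ev \ T.I, σ a = τ a := by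
  obtain ⟨x, y, -, ⟨p, hy⟩, hl⟩ := hT ht
  have outputs (ρ : E → Bool) (hρ : l ρ = true) : ∀ a ∈ T.Ev \ T.I, ρ a = p a := by
    rw [hl, Bool.and_eq_true_iff] at hρ
    exact (hy ρ).mp hρ.2
  exact fun a ha => (outputs σ hσ a ha).trans (outputs τ hτ a ha).symm

theorem C4.exists_fixesOn (hT : T.C4) (s : T.S) : ∃ p, T.FixesOn s (T.Ev \ T.I) p := by
  obtain ⟨y, ⟨p, hy⟩, hl⟩ := hT s
  refine ⟨p, fun l s' ht σ hσ => (hy σ).mp ?_⟩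
  obtain ⟨x, -, hlx⟩ := hl ht
  rw [hlx, Bool.and_eq_true_iff] at hσ
  exact hσ.2

end Constraints

section Composition

variable {P Q : TS E}

theorem SharedOK.symm (h : SharedOK P Q) : SharedOK Q P :=
  fun a ha => (h a (inter_comm Q.Ev P.Ev ▸ ha)).symm

theorem SharedOK.inputs_inter_subset_outputs (h : SharedOK P Q) (hwP : P.WF) :
    P.I ∩ Q.Ev ⊆ Q.Ev \ Q.I := fun a ⟨haP, haQ⟩ =>
  ⟨haQ, ((h a ⟨hwP haP, haQ⟩).resolve_right fun h' => h'.2 haP).2⟩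

theorem matches'_comp_iff {A : Set E} {lP lQ : BExpr E} :
    Matches' (comp P Q).I (hide (P.Ev ∩ Q.Ev) fun σ => lP σ && lQ σ) A ↔
      ∃ τ : E → Bool, (∀ a ∈ (comp P Q).I, τ a = decide (a ∈ A)) ∧
        lP τ = true ∧ lQ τ = true := by
  rw [matches'_hide_iff (I := (comp P Q).I) (H := P.Ev ∩ Q.Ev) disjoint_sdiff_left, matches'_iff]
  simp only [Bool.and_eq_true]

theorem exists_joint_tran (hwP : P.WF) (hwQ : Q.WF) (hc1P : P.C1) (hc2P : P.C2) (hc1Q : Q.C1)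
    (hc2Q : Q.C2) (hsh : SharedOK P Q) {sP : P.S} {sQ : Q.S} {p : E → Bool}
    (hfix : Q.FixesOn sQ (P.I ∩ Q.Ev) p) (ρ : E → Bool) :
    ∃ lP sP' lQ sQ' τ, (sP, lP, sP') ∈ P.Tran ∧ (sQ, lQ, sQ') ∈ Q.Tran ∧
      lP τ = true ∧ lQ τ = true ∧ ∀ a ∈ (comp P Q).I, τ a = ρ a := by
  obtain ⟨lP, sP', σP, htP, hσPρ, hσP⟩ :=
    hc1P.exists_tran sP fun a => if a ∈ Q.Ev then p a else ρ a
  obtain ⟨lQ, sQ', σQ, htQ, hσQρ, hσQ⟩ :=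
    hc1Q.exists_tran sQ fun a => if a ∈ P.Ev then σP a else ρ a
  set τ := P.Ev.piecewise σP σQ
  have hτP : ∀ a ∈ P.Ev, σP a = τ a := fun a ha => (piecewise_eq_of_mem _ _ _ ha).symm
  have hτQ' : ∀ a ∉ P.Ev, σQ a = τ a := fun a ha => (piecewise_eq_of_notMem _ _ _ ha).symm
  clear_value τ
  have hτQ : ∀ a ∈ Q.Ev, σQ a = τ a := by
    intro a haQ
    by_cases haP : a ∈ P.Ev
    · rw [← hτP a haP]
      by_cases haPI : a ∈ P.I
      · rw [hfix htQ σQ hσQ a ⟨haPI, haQ⟩, hσPρ a haPI, if_pos haQ]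
      · have haQI : a ∈ Q.I := ((hsh a ⟨haP, haQ⟩).resolve_left fun h => haPI h.1).1
        rw [hσQρ a haQI, if_pos haP]
    · exact hτQ' a haP
  refine ⟨lP, sP', lQ, sQ', τ, htP, htQ, (hc2P.dependsOn hwP htP σP τ hτP).symm.trans hσP,
    (hc2Q.dependsOn hwQ htQ σQ τ hτQ).symm.trans hσQ, fun a ⟨haI, haH⟩ => ?_⟩
  by_cases haP : a ∈ P.Ev
  · have haQ : a ∉ Q.Ev := fun haQ => haH ⟨haP, haQ⟩
    have haPI : a ∈ P.I := haI.resolve_right fun h => haQ (hwQ h)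
    rw [← hτP a haP, hσPρ a haPI, if_neg haQ]
  · have haQI : a ∈ Q.I := haI.resolve_left fun h => haP (hwP h)
    rw [← hτQ' a haP, hσQρ a haQI, if_neg haP]

theorem joint_tran_unique (hwQ : Q.WF) (hc1P : P.C1) (hc2P : P.C2) (hc1Q : Q.C1)
    (hsh : SharedOK P Q) {sP sP' sP'' : P.S} {sQ sQ' sQ'' : Q.S} {p : E → Bool}
    {lP lP' lQ lQ' : BExpr E} {τ τ' : E → Bool} (hfix : Q.FixesOn sQ (P.I ∩ Q.Ev) p)
    (htP : (sP, lP, sP') ∈ P.Tran) (htQ : (sQ, lQ, sQ') ∈ Q.Tran)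
    (htP' : (sP, lP', sP'') ∈ P.Tran) (htQ' : (sQ, lQ', sQ'') ∈ Q.Tran)
    (hP : lP τ = true) (hQ : lQ τ = true) (hP' : lP' τ' = true) (hQ' : lQ' τ' = true)
    (hττ' : ∀ a ∈ (comp P Q).I, τ a = τ' a) :
    (lP, sP') = (lP', sP'') ∧ (lQ, sQ') = (lQ', sQ'') := by
  have hPeq := hc1P.eq_of_eqOn_inputs htP htP' hP hP' fun a haI => by
    by_cases haQ : a ∈ Q.Ev
    · exact (hfix htQ τ hQ a ⟨haI, haQ⟩).trans (hfix htQ' τ' hQ' a ⟨haI, haQ⟩).symm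
    · exact hττ' a ⟨Or.inl haI, fun h => haQ h.2⟩
  obtain ⟨rfl, -⟩ := Prod.mk.inj hPeq
  refine ⟨hPeq, hc1Q.eq_of_eqOn_inputs htQ htQ' hQ hQ' fun a haI => ?_⟩
  by_cases haP : a ∈ P.Ev
  · have haPI : a ∉ P.I := ((hsh a ⟨haP, hwQ haI⟩).resolve_left fun h => h.2 haI).2
    exact hc2P.eqOn_outputs htP hP hP' a ⟨haP, haPI⟩
  · exact hττ' a ⟨Or.inr haI, fun h => haP h.1⟩

theorem comp_c1At (hwP : P.WF) (hwQ : Q.WF) (hc1P : P.C1) (hc2P : P.C2) (hc1Q : Q.C1)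
    (hc2Q : Q.C2) (hsh : SharedOK P Q) {sP : P.S} {sQ : Q.S} {p : E → Bool}
    (hfix : Q.FixesOn sQ (P.I ∩ Q.Ev) p) : (comp P Q).C1At (sP, sQ) := by
  intro A _
  obtain ⟨lP, sP', lQ, sQ', τ, htP, htQ, hP, hQ, hτA⟩ :=
    exists_joint_tran hwP hwQ hc1P hc2P hc1Q hc2Q hsh hfix fun a => decide (a ∈ A)
  refine ⟨(hide (P.Ev ∩ Q.Ev) fun σ => lP σ && lQ σ, (sP', sQ')),
    ⟨⟨lP, lQ, htP, htQ, ⟨τ, by simp [hP, hQ]⟩, rfl⟩, matches'_comp_iff.mpr ⟨τ, hτA, hP, hQ⟩⟩, ?_⟩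
  rintro ⟨l, sP'', sQ''⟩ ⟨⟨lP', lQ', htP', htQ', -, rfl⟩, hm⟩
  obtain ⟨τ', hτ'A, hP', hQ'⟩ := matches'_comp_iff.mp hm
  obtain ⟨hPeq, hQeq⟩ := joint_tran_unique hwQ hc1P hc2P hc1Q hsh hfix htP' htQ' htP htQ
    hP' hQ' hP hQ fun a ha => (hτ'A a ha).trans (hτA a ha).symm
  obtain ⟨rfl, rfl⟩ := Prod.mk.inj hPeq
  obtain ⟨rfl, rfl⟩ := Prod.mk.inj hQeq
  rfl

theorem comp_I_comm : (comp Q P).I = (comp P Q).I := by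
  change (Q.I ∪ P.I) \ (Q.Ev ∩ P.Ev) = (P.I ∪ Q.I) \ (P.Ev ∩ Q.Ev)
  rw [union_comm, inter_comm]

theorem mem_comp_tran_comm {sP sP' : P.S} {sQ sQ' : Q.S} {l : BExpr E} :
    ((sQ, sP), l, (sQ', sP')) ∈ (comp Q P).Tran ↔
      ((sP, sQ), l, (sP', sQ')) ∈ (comp P Q).Tran := by
  have hand (l₁ l₂ : BExpr E) : (fun σ => l₁ σ && l₂ σ) = fun σ => l₂ σ && l₁ σ :=
    funext fun σ => Bool.and_comm _ _
  constructor <;> rintro ⟨l₁, l₂, h₁, h₂, hsat, rfl⟩ <;>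
    exact ⟨l₂, l₁, h₂, h₁, hand l₁ l₂ ▸ hsat, by rw [hand, inter_comm]⟩

theorem C1At.of_comp_comm {sP : P.S} {sQ : Q.S} (h : (comp Q P).C1At (sQ, sP)) :
    (comp P Q).C1At (sP, sQ) := by
  intro A hA
  rw [← comp_I_comm] at hA ⊢
  refine (((Equiv.refl _).prodCongr (Equiv.prodComm Q.S P.S)).existsUnique_congr
    fun t => ?_).mp (h A hA)
  obtain ⟨l, sQ', sP'⟩ := t
  exact and_congr_left' mem_comp_tran_comm

end Composition

end TS

/-- the composition of composable systems satisfies constraint 1. -/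
theorem stmt5 {E : Type} (P Q : TS E) (h : TS.Composable P Q) :
    ∀ s : (TS.comp P Q).S, TS.Reach (TS.comp P Q) s →
      ∀ A : Set E, A ⊆ (TS.comp P Q).I →
        ∃! t : BExpr E × (TS.comp P Q).S,
          ((s, t.1, t.2) ∈ (TS.comp P Q).Tran ∧ Matches' (TS.comp P Q).I t.1 A) := by
  obtain ⟨hwP, hwQ, hc1P, hc2P, -, hc1Q, hc2Q, -, hsh, -, -, hnc4Q⟩ := h
  rintro ⟨sP, sQ⟩ -
  by_cases hQ4 : Q.C4
  · obtain ⟨p, hp⟩ := hQ4.exists_fixesOn sQ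
    exact TS.comp_c1At hwP hwQ hc1P hc2P hc1Q hc2Q hsh
      (hp.mono (hsh.inputs_inter_subset_outputs hwP))
  · have hnothing : Q.I ∩ P.Ev = ∅ := eq_empty_of_forall_notMem fun a ⟨haQ, haP⟩ =>
      ((hnc4Q hQ4).subset ⟨haP, hwQ haQ⟩).2 haQ
    refine TS.C1At.of_comp_comm (TS.comp_c1At hwQ hwP hc1Q hc2Q hc1P hc2P hsh.symm
      (p := fun _ => true) ?_)
    simp [TS.FixesOn, hnothing]
end
end

section
/- The composition T = P ∥ Q of two composable transition systems satisfies constraint 2: every label of T is of the form x·y with x ∈ Bool(T.I) and y ∈ Conj(T.E \ T.I). Specifically, if l = v·w·x·y with v ∈ Bool(P.I), w ∈ Conj(P.E\P.I), x ∈ Bool(Q.I), y ∈ Conj(Q.E\Q.I), then θ(l) = (v'·x')·(w'·y') with v'·x' ∈ Bool(T.I) and w'·y' ∈ Conj(T.E\T.I). -/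
open Classical

noncomputable section

/-! The hidden shared events are forced: by condition D each shared event is an output of one of
the two systems, so in every satisfying assignment of `l_P · l_Q` its value is fixed by the output
conjunction of that system. Hence θ(l) is `l_P · l_Q` with those values substituted, and the
substitution splits `θ(l)` into the input part `x_P · x_Q` and the output part `y_P · y_Q`. -/

variable {E : Type}

theorem DependsOn'.mono {l : BExpr E} {V W : Set E} (hl : DependsOn' l V) (hVW : V ⊆ W) :
    DependsOn' l W :=
  fun σ τ h => hl σ τ fun a ha => h a (hVW ha)

theorem DependsOn'.and {x y : BExpr E} {V : Set E} (hx : DependsOn' x V) (hy : DependsOn' y V) :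
    DependsOn' (fun σ => x σ && y σ) V :=
  fun σ τ h => by simp only [hx σ τ h, hy σ τ h]

theorem DependsOn'.comp_piecewise {l : BExpr E} {V H : Set E} [DecidablePred (· ∈ H)]
    (f : E → Bool) (hl : DependsOn' l V) :
    DependsOn' (fun σ => l (H.piecewise f σ)) (V \ H) := by
  refine fun σ τ h => hl _ _ fun a ha => ?_
  by_cases haH : a ∈ H
  · simp only [Set.piecewise_eq_of_mem _ _ _ haH]
  · simp only [Set.piecewise_eq_of_notMem _ _ _ haH, h a ⟨ha, haH⟩]

theorem IsFullConj.comp_piecewise {y : BExpr E} {V H : Set E} [DecidablePred (· ∈ H)]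
    {f p : E → Bool}
    (hy : ∀ σ, y σ = true ↔ ∀ a ∈ V, σ a = p a) (hf : ∀ a ∈ V ∩ H, f a = p a) :
    IsFullConj (fun σ => y (H.piecewise f σ)) (V \ H) := by
  refine ⟨p, fun σ => (hy _).trans ⟨fun h a ha => ?_, fun h a ha => ?_⟩⟩
  · simpa only [Set.piecewise_eq_of_notMem _ _ _ ha.2] using h a ha.1
  · by_cases haH : a ∈ H
    · rw [Set.piecewise_eq_of_mem _ _ _ haH, hf a ⟨ha, haH⟩]
    · rw [Set.piecewise_eq_of_notMem _ _ _ haH, h a ⟨ha, haH⟩]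

theorem IsFullConj.and {y z : BExpr E} {V W : Set E} (hy : IsFullConj y V) (hz : IsFullConj z W)
    (hVW : Disjoint V W) : IsFullConj (fun σ => y σ && z σ) (V ∪ W) := by
  obtain ⟨p, hp⟩ := hy
  obtain ⟨q, hq⟩ := hz
  refine ⟨V.piecewise p q, fun σ => ?_⟩
  simp only [Bool.and_eq_true, hp, hq, Set.mem_union, or_imp, forall_and]
  refine and_congr (forall₂_congr fun a ha => ?_) (forall₂_congr fun a ha => ?_)
  · rw [Set.piecewise_eq_of_mem _ _ _ ha]
  · rw [Set.piecewise_eq_of_notMem _ _ _ (Set.disjoint_right.mp hVW ha)]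

theorem TS.hide_eq_of_forced {H : Set E} [DecidablePred (· ∈ H)] {l : BExpr E} {f : E → Bool}
    (hl : ∀ τ, l τ = true → ∀ a ∈ H, τ a = f a) (σ : E → Bool) :
    TS.hide H l σ = l (H.piecewise f σ) := by
  have hsat : (∃ τ : E → Bool, (∀ a ∉ H, τ a = σ a) ∧ l τ = true) ↔
      l (H.piecewise f σ) = true := by
    refine ⟨fun ⟨τ, hτσ, hτ⟩ => ?_,
      fun h => ⟨_, fun a ha => Set.piecewise_eq_of_notMem _ _ _ ha, h⟩⟩
    have hτ_eq : τ = H.piecewise f σ := funext fun a => by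
      by_cases ha : a ∈ H
      · rw [Set.piecewise_eq_of_mem _ _ _ ha, hl τ hτ a ha]
      · rw [Set.piecewise_eq_of_notMem _ _ _ ha, hτσ a ha]
    exact hτ_eq ▸ hτ
  simp only [TS.hide, hsat, Bool.decide_eq_true]

namespace TS

variable {P Q : TS E}

theorem comp_Ev_diff_I (hP : P.WF) (hQ : Q.WF) :
    (comp P Q).Ev \ (comp P Q).I =
      (P.Ev \ P.I) \ (P.Ev ∩ Q.Ev) ∪ (Q.Ev \ Q.I) \ (P.Ev ∩ Q.Ev) := by
  ext a
  have := @hP a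
  have := @hQ a
  simp only [comp, Set.mem_sdiff, Set.mem_union, Set.mem_inter_iff]
  tauto

/-- The value forced on a shared event by the output conjunction (`pP` of `P`, `pQ` of `Q`) of
the system for which it is an output. -/
def sharedValue (P : TS E) (pP pQ : E → Bool) (a : E) : Bool :=
  if a ∈ P.I then pQ a else pP a

theorem eq_sharedValue (hD : SharedOK P Q) {pP pQ τ : E → Bool}
    (hP : ∀ a ∈ P.Ev \ P.I, τ a = pP a) (hQ : ∀ a ∈ Q.Ev \ Q.I, τ a = pQ a) :
    ∀ a ∈ P.Ev ∩ Q.Ev, τ a = sharedValue P pP pQ a := by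
  intro a ha
  rcases hD a ha with ⟨haP, haQ⟩ | ⟨-, haP⟩
  · rw [sharedValue, if_pos haP, hQ a ⟨ha.2, haQ⟩]
  · rw [sharedValue, if_neg haP, hP a ⟨ha.1, haP⟩]

theorem sharedValue_eq_left {pP pQ : E → Bool} :
    ∀ a ∈ (P.Ev \ P.I) ∩ (P.Ev ∩ Q.Ev), sharedValue P pP pQ a = pP a :=
  fun _ ha => if_neg ha.1.2

theorem sharedValue_eq_right (hD : SharedOK P Q) {pP pQ : E → Bool} :
    ∀ a ∈ (Q.Ev \ Q.I) ∩ (P.Ev ∩ Q.Ev), sharedValue P pP pQ a = pQ a := by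
  rintro a ⟨⟨-, haQ⟩, ha⟩
  rcases hD a ha with ⟨haP, -⟩ | ⟨haQ', -⟩
  · exact if_pos haP
  · exact absurd haQ' haQ

end TS

/-- the composition of composable systems satisfies constraint 2: every
label of T = P ∥ Q is of the form x·y with x ∈ Bool(T.I), y ∈ Conj(T.E ∖ T.I). -/
theorem stmt6 {E : Type} (P Q : TS E) (h : TS.Composable P Q) :
    (TS.comp P Q).C2 := by
  obtain ⟨hPwf, hQwf, -, hPC2, -, -, hQC2, -, hD, -⟩ := h
  rintro ⟨sP, sQ⟩ l ⟨sP', sQ'⟩ ⟨lP, lQ, htP, htQ, -, rfl⟩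
  obtain ⟨xP, yP, hxP, ⟨pP, hpP⟩, hlP⟩ := hPC2 htP
  obtain ⟨xQ, yQ, hxQ, ⟨pQ, hpQ⟩, hlQ⟩ := hQC2 htQ
  set H := P.Ev ∩ Q.Ev
  set f := TS.sharedValue P pP pQ
  have hforced : ∀ τ, (lP τ && lQ τ) = true → ∀ a ∈ H, τ a = f a := by
    intro τ hτ
    simp only [hlP, hlQ, Bool.and_eq_true] at hτ
    exact TS.eq_sharedValue hD ((hpP τ).mp hτ.1.2) ((hpQ τ).mp hτ.2.2)
  refine ⟨fun σ => xP (H.piecewise f σ) && xQ (H.piecewise f σ),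
    fun σ => yP (H.piecewise f σ) && yQ (H.piecewise f σ), ?_, ?_, fun σ => ?_⟩
  · exact ((hxP.comp_piecewise _).mono (Set.sdiff_subset_sdiff_left Set.subset_union_left)).and
      ((hxQ.comp_piecewise _).mono (Set.sdiff_subset_sdiff_left Set.subset_union_right))
  · rw [TS.comp_Ev_diff_I hPwf hQwf]
    refine (IsFullConj.comp_piecewise hpP TS.sharedValue_eq_left).and
      (IsFullConj.comp_piecewise hpQ (TS.sharedValue_eq_right hD)) ?_
    exact Set.disjoint_left.mpr fun a ha hb => ha.2 ⟨ha.1.1, hb.1.1⟩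
  · rw [TS.hide_eq_of_forced hforced, hlP, hlQ]
    dsimp only
    ac_rfl
end
end
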